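/- Let k ∈ ℕ and θ ∈ [0,1]. There exists a constant c = c(k,θ) > 0 such that for every g ∈ C^{k,θ}(ℝ), the convolution K∗g belongs to C^{k+1,θ}(ℝ), its first derivative satisfies (K∗g)′ = G₂∗g − g everywhere on ℝ, and ‖K∗g‖_{C^{k+1,θ}} ≤ c·‖g‖_{C^{k,θ}}. -/

import Mathlib

/-!
Splitting the integral at `y = 0` gives `K ∗ g = (R g - L g) / 2` and `G₂ ∗ g = (R g + L g) / 2`
with `R g x = ∫_{t > x} e^{x-t} g t` and `L g x = ∫_{t ≤ x} e^{t-x} g t`. By the fundamental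
theorem of calculus `(R g)' = R g - g` and `(L g)' = g - L g`, hence `(K ∗ g)' = G₂ ∗ g - g` and
`(G₂ ∗ g)' = K ∗ g`. Derivatives of order `j ≤ k` pass through the integrable kernel, so
`(K ∗ g)^{(j)} = K ∗ g^{(j)}` and `(K ∗ g)^{(k+1)} = G₂ ∗ g^{(k)} - g^{(k)}`. As
`∫ |K| ≤ ∫ G₂ = 1`, convolution increases neither sup norms nor increments, which gives `c = 3`.
-/

open MeasureTheory Real
open scoped ENNReal NNReal

/-- The supremum norm `‖f‖_∞ = sup_x |f(x)|` (as a real-valued junk-tolerant `iSup`). -/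
noncomputable def supNorm (f : ℝ → ℝ) : ℝ := ⨆ x : ℝ, |f x|

/-- The Hölder seminorm `sup_{h ≠ 0} sup_x |f⁽ᵏ⁾(x+h) - f⁽ᵏ⁾(x)| / |h|^θ`. -/
noncomputable def holderSeminorm (k : ℕ) (θ : ℝ) (f : ℝ → ℝ) : ℝ :=
  ⨆ h : {h : ℝ // h ≠ 0}, ⨆ x : ℝ,
    |iteratedDeriv k f (x + ↑h) - iteratedDeriv k f x| / |(h : ℝ)| ^ θ

/-- The `C^{k,θ}` norm `‖f‖_{C^{k,θ}} = Σ_{j=0}^k ‖f⁽ʲ⁾‖_∞ + [f⁽ᵏ⁾]_θ`. -/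
noncomputable def holderNorm (k : ℕ) (θ : ℝ) (f : ℝ → ℝ) : ℝ :=
  (∑ j ∈ Finset.range (k + 1), supNorm (iteratedDeriv j f)) + holderSeminorm k θ f

/-- Membership in the Hölder class `C^{k,θ}(ℝ)`: `f` is `k` times continuously
differentiable, all derivatives up to order `k` are bounded, and the `k`-th derivative is
`θ`-Hölder continuous. -/
def MemHolderClass (k : ℕ) (θ : ℝ) (f : ℝ → ℝ) : Prop :=
  ContDiff ℝ (k : ℕ∞) f ∧
  (∀ j ≤ k, ∃ C : ℝ, ∀ x : ℝ, |iteratedDeriv j f x| ≤ C) ∧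
  (∃ C : ℝ, ∀ x y : ℝ, |iteratedDeriv k f x - iteratedDeriv k f y| ≤ C * |x - y| ^ θ)

/-- The kernel `K(x) = -sgn(x) e^{-|x|}/2`, the derivative of the Green's function
`G₂(x) = e^{-|x|}/2` of `1 - d²/dx²` on `ℝ`. -/
noncomputable def bbmK (x : ℝ) : ℝ := -Real.sign x * Real.exp (-|x|) / 2

/-- The Green's function `G₂(x) = e^{-|x|}/2` of `1 - d²/dx²` on `ℝ`. -/
noncomputable def bbmG₂ (x : ℝ) : ℝ := Real.exp (-|x|) / 2

open Set Filter

theorem Real.measurable_sign : Measurable Real.sign := by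
  have h : Real.sign = fun r => if r < 0 then -1 else if 0 < r then 1 else 0 := rfl
  rw [h]
  exact Measurable.ite (measurableSet_lt measurable_id measurable_const) measurable_const
    (Measurable.ite (measurableSet_lt measurable_const measurable_id) measurable_const
      measurable_const)

section Kernels

lemma bbmG₂_nonneg (x : ℝ) : 0 ≤ bbmG₂ x := by
  unfold bbmG₂; positivity

lemma measurable_bbmK : Measurable bbmK :=
  (Real.measurable_sign.neg.mul (by fun_prop)).div_const 2

lemma abs_bbmK_le (x : ℝ) : |bbmK x| ≤ bbmG₂ x := by
  have hsign : |Real.sign x| ≤ 1 := by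
    rcases Real.sign_apply_eq x with h | h | h <;> simp [h]
  simp only [bbmK, bbmG₂, abs_div, abs_mul, abs_neg, abs_of_pos (exp_pos _), abs_two]
  gcongr
  exact mul_le_of_le_one_left (exp_pos _).le hsign

lemma integral_bbmG₂ : ∫ y, bbmG₂ y = 1 := by
  unfold bbmG₂
  rw [integral_div, integral_comp_abs (f := fun x => exp (-x)), integral_exp_neg_Ioi_zero]
  norm_num

lemma integrable_bbmG₂ : Integrable bbmG₂ := by
  by_contra h
  simpa [integral_undef h] using integral_bbmG₂

lemma integrable_bbmK : Integrable bbmK :=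
  integrable_bbmG₂.mono' measurable_bbmK.aestronglyMeasurable (ae_of_all _ abs_bbmK_le)

lemma integral_abs_bbmG₂ : ∫ y, |bbmG₂ y| = 1 := by
  simp_rw [abs_of_nonneg (bbmG₂_nonneg _)]
  exact integral_bbmG₂

lemma integral_abs_bbmK_le_one : ∫ y, |bbmK y| ≤ 1 :=
  integral_bbmG₂ ▸ integral_mono integrable_bbmK.abs integrable_bbmG₂ abs_bbmK_le

lemma bbmK_sub_of_lt {x t : ℝ} (h : t < x) : bbmK (x - t) = -(exp (t - x) / 2) := by
  rw [bbmK, Real.sign_of_pos (sub_pos.2 h), abs_of_pos (sub_pos.2 h), neg_sub]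
  ring

lemma bbmK_sub_of_gt {x t : ℝ} (h : x < t) : bbmK (x - t) = exp (x - t) / 2 := by
  rw [bbmK, Real.sign_of_neg (sub_neg.2 h), abs_of_neg (sub_neg.2 h), neg_neg, neg_neg, one_mul]

lemma bbmG₂_sub_of_le {x t : ℝ} (h : t ≤ x) : bbmG₂ (x - t) = exp (t - x) / 2 := by
  rw [bbmG₂, abs_of_nonneg (sub_nonneg.2 h), neg_sub]

lemma bbmG₂_sub_of_ge {x t : ℝ} (h : x ≤ t) : bbmG₂ (x - t) = exp (x - t) / 2 := by
  rw [bbmG₂, abs_of_nonpos (sub_nonpos.2 h), neg_neg]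

end Kernels

section TailIntegrals

variable {E : Type*} [NormedAddCommGroup E] [NormedSpace ℝ E] [CompleteSpace E] {f : ℝ → E}

theorem hasDerivAt_integral_Ioi (hf : Continuous f) (hfi : ∀ a, IntegrableOn f (Ioi a))
    (x : ℝ) : HasDerivAt (fun z => ∫ t in Ioi z, f t) (-f x) x := by
  have h : (fun z => ∫ t in Ioi z, f t) = fun z => (∫ t in Ioi 0, f t) - ∫ t in 0..z, f t := by
    funext z
    rw [← intervalIntegral.integral_Ioi_sub_Ioi' (hfi 0) (hfi z), sub_sub_cancel]
  rw [h]
  exact (intervalIntegral.integral_hasDerivAt_right (hf.intervalIntegrable 0 x)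
    hf.aestronglyMeasurable.stronglyMeasurableAtFilter hf.continuousAt).const_sub _

theorem hasDerivAt_integral_Iic (hf : Continuous f) (hfi : ∀ a, IntegrableOn f (Iic a))
    (x : ℝ) : HasDerivAt (fun z => ∫ t in Iic z, f t) (f x) x := by
  have h : (fun z => ∫ t in Iic z, f t) = fun z => (∫ t in Iic 0, f t) + ∫ t in 0..z, f t := by
    funext z
    rw [← intervalIntegral.integral_Iic_sub_Iic (hfi 0) (hfi z), add_sub_cancel]
  rw [h]
  exact (intervalIntegral.integral_hasDerivAt_right (hf.intervalIntegrable 0 x)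
    hf.aestronglyMeasurable.stronglyMeasurableAtFilter hf.continuousAt).const_add _

end TailIntegrals

noncomputable def rightExpConv (g : ℝ → ℝ) (x : ℝ) : ℝ := ∫ t in Ioi x, exp (x - t) * g t

noncomputable def leftExpConv (g : ℝ → ℝ) (x : ℝ) : ℝ := ∫ t in Iic x, exp (t - x) * g t

lemma rightExpConv_eq (g : ℝ → ℝ) (x : ℝ) :
    rightExpConv g x = exp x * ∫ t in Ioi x, exp (-t) * g t := by
  rw [rightExpConv, ← integral_const_mul]
  congr 1 with t
  rw [sub_eq_add_neg, exp_add, mul_assoc]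

lemma leftExpConv_eq (g : ℝ → ℝ) (x : ℝ) :
    leftExpConv g x = exp (-x) * ∫ t in Iic x, exp t * g t := by
  rw [leftExpConv, ← integral_const_mul]
  congr 1 with t
  rw [sub_eq_add_neg, exp_add, mul_comm (exp t), mul_assoc]

section ExpConv

variable {g : ℝ → ℝ} {M : ℝ}

lemma hasDerivAt_rightExpConv (hg : Continuous g) (hM : ∀ x, |g x| ≤ M) (x : ℝ) :
    HasDerivAt (rightExpConv g) (rightExpConv g x - g x) x := by
  have hint (a : ℝ) : IntegrableOn (fun t => exp (-t) * g t) (Ioi a) :=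
    (integrableOn_exp_neg_Ioi a).mul_bdd hg.aestronglyMeasurable (ae_of_all _ hM)
  have h := (hasDerivAt_exp x).mul (hasDerivAt_integral_Ioi (by fun_prop) hint x)
  rw [show rightExpConv g = _ from funext (rightExpConv_eq g)]
  refine h.congr_deriv ?_
  beta_reduce
  rw [mul_neg, ← mul_assoc, ← exp_add, add_neg_cancel, exp_zero, one_mul]
  ring

lemma hasDerivAt_leftExpConv (hg : Continuous g) (hM : ∀ x, |g x| ≤ M) (x : ℝ) :
    HasDerivAt (leftExpConv g) (g x - leftExpConv g x) x := by
  have hint (a : ℝ) : IntegrableOn (fun t => exp t * g t) (Iic a) :=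
    (integrableOn_exp_Iic a).mul_bdd hg.aestronglyMeasurable (ae_of_all _ hM)
  have h := ((hasDerivAt_exp (-x)).comp x (hasDerivAt_neg x)).mul
    (hasDerivAt_integral_Iic (by fun_prop) hint x)
  rw [show leftExpConv g = _ from funext (leftExpConv_eq g)]
  refine h.congr_deriv ?_
  simp only [Function.comp_apply]
  rw [← mul_assoc, ← exp_add, neg_add_cancel, exp_zero, one_mul]
  ring

end ExpConv

section KernelConvolution

variable {κ g : ℝ → ℝ} {M : ℝ}

lemma integrable_mul_comp_sub (hκ : Integrable κ) (hg : Continuous g) (hM : ∀ z, |g z| ≤ M)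
    (x : ℝ) : Integrable fun y => κ y * g (x - y) :=
  hκ.mul_bdd (by fun_prop : Continuous fun y => g (x - y)).aestronglyMeasurable
    (ae_of_all _ fun y => hM _)

lemma abs_integral_mul_comp_sub_le (hκ : Integrable κ) (hM : ∀ z, |g z| ≤ M) (x : ℝ) :
    |∫ y, κ y * g (x - y)| ≤ (∫ y, |κ y|) * M := by
  rw [← integral_mul_const]
  refine norm_integral_le_of_norm_le (f := fun y => κ y * g (x - y)) (hκ.abs.mul_const M)
    (ae_of_all _ fun y => ?_)
  rw [Real.norm_eq_abs, abs_mul]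
  exact mul_le_mul_of_nonneg_left (hM _) (abs_nonneg _)

lemma abs_integral_mul_comp_sub_add_sub_le (hκ : Integrable κ) (hg : Continuous g)
    (hM : ∀ z, |g z| ≤ M) {t D : ℝ} (hD : ∀ z, |g (z + t) - g z| ≤ D) (x : ℝ) :
    |(∫ y, κ y * g (x + t - y)) - ∫ y, κ y * g (x - y)| ≤ (∫ y, |κ y|) * D := by
  rw [← integral_sub (integrable_mul_comp_sub hκ hg hM _) (integrable_mul_comp_sub hκ hg hM x)]
  convert abs_integral_mul_comp_sub_le hκ hD x using 3
  funext y
  rw [sub_add_eq_add_sub, mul_sub]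

lemma integral_mul_comp_sub_eq_Iic_add_Ioi (x : ℝ)
    (h : Integrable fun y => κ y * g (x - y)) :
    ∫ y, κ y * g (x - y) = (∫ t in Iic x, κ (x - t) * g t) + ∫ t in Ioi x, κ (x - t) * g t := by
  have h' : Integrable fun t => κ (x - t) * g t := by simpa using h.comp_sub_left x
  rw [intervalIntegral.integral_Iic_add_Ioi h'.integrableOn h'.integrableOn,
    ← integral_sub_left_eq_self _ volume x]
  simp

lemma hasDerivAt_integral_mul_comp_sub (hκ : Integrable κ) {g' : ℝ → ℝ} {M' : ℝ}
    (hg : ∀ z, HasDerivAt g (g' z) z) (hg' : Continuous g') (hM : ∀ z, |g z| ≤ M)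
    (hM' : ∀ z, |g' z| ≤ M') (x : ℝ) :
    HasDerivAt (fun z => ∫ y, κ y * g (z - y)) (∫ y, κ y * g' (x - y)) x := by
  have hgc : Continuous g := continuous_iff_continuousAt.2 fun z => (hg z).continuousAt
  refine (hasDerivAt_integral_of_dominated_loc_of_deriv_le (F := fun z y => κ y * g (z - y)) (F' := fun z y => κ y * g' (z - y))
    (bound := fun y => |κ y| * M')
    univ_mem (Eventually.of_forall fun z => (integrable_mul_comp_sub hκ hgc hM z).1)
    (integrable_mul_comp_sub hκ hgc hM x) (integrable_mul_comp_sub hκ hg' hM' x).1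
    (ae_of_all _ fun y z _ => ?_) (hκ.abs.mul_const M')
    (ae_of_all _ fun y z _ => ?_)).2
  · rw [Real.norm_eq_abs, abs_mul]
    exact mul_le_mul_of_nonneg_left (hM' _) (abs_nonneg _)
  · simpa using ((hg (z - y)).comp z ((hasDerivAt_id z).sub_const y)).const_mul (κ y)

lemma iteratedDeriv_integral_mul_comp_sub (hκ : Integrable κ) {k : ℕ}
    (hgC : ContDiff ℝ (k : ℕ∞) g) (hgB : ∀ j ≤ k, ∃ C, ∀ x, |iteratedDeriv j g x| ≤ C) :
    ∀ j ≤ k, iteratedDeriv j (fun z => ∫ y, κ y * g (z - y)) =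
      fun z => ∫ y, κ y * iteratedDeriv j g (z - y) := by
  intro j hj
  induction j with
  | zero => simp
  | succ j ih =>
    obtain ⟨C, hC⟩ := hgB j (by omega)
    obtain ⟨C', hC'⟩ := hgB (j + 1) hj
    have hd : Differentiable ℝ (iteratedDeriv j g) :=
      hgC.differentiable_iteratedDeriv j (by exact_mod_cast hj)
    have hderiv (z : ℝ) : HasDerivAt (iteratedDeriv j g) (iteratedDeriv (j + 1) g z) z := by
      rw [iteratedDeriv_succ]
      exact (hd z).hasDerivAt
    rw [iteratedDeriv_succ, ih (by omega)]
    exact funext fun x => (hasDerivAt_integral_mul_comp_sub hκ hderiv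
      (hgC.continuous_iteratedDeriv (j + 1) (by exact_mod_cast hj)) hC hC' x).deriv

end KernelConvolution

section GreenFunction

variable {g : ℝ → ℝ} {M : ℝ}

lemma integral_bbmK_mul_eq (hg : Continuous g) (hM : ∀ z, |g z| ≤ M) (x : ℝ) :
    ∫ y, bbmK y * g (x - y) = (rightExpConv g x - leftExpConv g x) / 2 := by
  have hleft : ∫ t in Iic x, bbmK (x - t) * g t = -(leftExpConv g x / 2) := by
    rw [leftExpConv, integral_Iic_eq_integral_Iio, integral_Iic_eq_integral_Iio,
      ← integral_div, ← integral_neg]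
    refine setIntegral_congr_fun measurableSet_Iio fun t ht => ?_
    rw [bbmK_sub_of_lt ht]
    ring
  have hright : ∫ t in Ioi x, bbmK (x - t) * g t = rightExpConv g x / 2 := by
    rw [rightExpConv, ← integral_div]
    refine setIntegral_congr_fun measurableSet_Ioi fun t ht => ?_
    rw [bbmK_sub_of_gt ht]
    ring
  rw [integral_mul_comp_sub_eq_Iic_add_Ioi x (integrable_mul_comp_sub integrable_bbmK hg hM x),
    hleft, hright]
  ring

lemma integral_bbmG₂_mul_eq (hg : Continuous g) (hM : ∀ z, |g z| ≤ M) (x : ℝ) :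
    ∫ y, bbmG₂ y * g (x - y) = (rightExpConv g x + leftExpConv g x) / 2 := by
  have hleft : ∫ t in Iic x, bbmG₂ (x - t) * g t = leftExpConv g x / 2 := by
    rw [leftExpConv, ← integral_div]
    refine setIntegral_congr_fun measurableSet_Iic fun t ht => ?_
    rw [bbmG₂_sub_of_le ht]
    ring
  have hright : ∫ t in Ioi x, bbmG₂ (x - t) * g t = rightExpConv g x / 2 := by
    rw [rightExpConv, ← integral_div]
    refine setIntegral_congr_fun measurableSet_Ioi fun t ht => ?_
    rw [bbmG₂_sub_of_ge (le_of_lt ht)]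
    ring
  rw [integral_mul_comp_sub_eq_Iic_add_Ioi x
    (integrable_mul_comp_sub integrable_bbmG₂ hg hM x), hleft, hright]
  ring

theorem hasDerivAt_integral_bbmK_mul (hg : Continuous g) (hM : ∀ z, |g z| ≤ M) (x : ℝ) :
    HasDerivAt (fun z => ∫ y, bbmK y * g (z - y)) ((∫ y, bbmG₂ y * g (x - y)) - g x) x := by
  rw [funext (integral_bbmK_mul_eq hg hM), integral_bbmG₂_mul_eq hg hM]
  refine (((hasDerivAt_rightExpConv hg hM x).sub (hasDerivAt_leftExpConv hg hM x)).div_const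
    2).congr_deriv ?_
  ring

theorem hasDerivAt_integral_bbmG₂_mul (hg : Continuous g) (hM : ∀ z, |g z| ≤ M) (x : ℝ) :
    HasDerivAt (fun z => ∫ y, bbmG₂ y * g (z - y)) (∫ y, bbmK y * g (x - y)) x := by
  rw [funext (integral_bbmG₂_mul_eq hg hM), integral_bbmK_mul_eq hg hM]
  refine (((hasDerivAt_rightExpConv hg hM x).add (hasDerivAt_leftExpConv hg hM x)).div_const
    2).congr_deriv ?_
  ring

lemma abs_integral_bbmG₂_mul_sub_le (hM : ∀ z, |g z| ≤ M) (x : ℝ) :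
    |(∫ y, bbmG₂ y * g (x - y)) - g x| ≤ 2 * M := by
  have hconv := abs_integral_mul_comp_sub_le integrable_bbmG₂ hM x
  rw [integral_abs_bbmG₂, one_mul] at hconv
  linarith [abs_sub (∫ y, bbmG₂ y * g (x - y)) (g x), hM x]

lemma abs_integral_bbmG₂_mul_sub_add_sub_le (hg : Continuous g) (hM : ∀ z, |g z| ≤ M)
    {t D : ℝ} (hD : ∀ z, |g (z + t) - g z| ≤ D) (x : ℝ) :
    |((∫ y, bbmG₂ y * g (x + t - y)) - g (x + t)) - ((∫ y, bbmG₂ y * g (x - y)) - g x)| ≤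
      2 * D := by
  have hconv := abs_integral_mul_comp_sub_add_sub_le integrable_bbmG₂ hg hM hD x
  rw [integral_abs_bbmG₂, one_mul] at hconv
  rw [sub_sub_sub_comm]
  linarith [abs_sub ((∫ y, bbmG₂ y * g (x + t - y)) - ∫ y, bbmG₂ y * g (x - y))
    (g (x + t) - g x), hD x]

end GreenFunction

section HolderNorm

variable {f : ℝ → ℝ} {k : ℕ} {θ C : ℝ}

lemma supNorm_nonneg (f : ℝ → ℝ) : 0 ≤ supNorm f :=
  Real.iSup_nonneg fun _ => abs_nonneg _

lemma supNorm_le (h : ∀ x, |f x| ≤ C) : supNorm f ≤ C :=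
  ciSup_le h

lemma le_supNorm (h : ∀ x, |f x| ≤ C) (x : ℝ) : |f x| ≤ supNorm f :=
  le_ciSup ⟨C, forall_mem_range.2 h⟩ x

lemma holderSeminorm_nonneg (k : ℕ) (θ : ℝ) (f : ℝ → ℝ) : 0 ≤ holderSeminorm k θ f :=
  Real.iSup_nonneg fun _ => Real.iSup_nonneg fun _ => by positivity

lemma holderSeminorm_le (hC : 0 ≤ C)
    (h : ∀ x t, |iteratedDeriv k f (x + t) - iteratedDeriv k f x| ≤ C * |t| ^ θ) :
    holderSeminorm k θ f ≤ C := by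
  refine Real.iSup_le (fun t => Real.iSup_le (fun x => ?_) hC) hC
  rw [div_le_iff₀ (by have := t.2; positivity)]
  exact h x t

lemma abs_iteratedDeriv_add_sub_le
    (h : ∃ C, ∀ x y, |iteratedDeriv k f x - iteratedDeriv k f y| ≤ C * |x - y| ^ θ) (x t : ℝ) :
    |iteratedDeriv k f (x + t) - iteratedDeriv k f x| ≤ holderSeminorm k θ f * |t| ^ θ := by
  obtain ⟨C, hC⟩ := h
  rcases eq_or_ne t 0 with rfl | ht
  · simpa using mul_nonneg (holderSeminorm_nonneg k θ f) (by positivity : (0 : ℝ) ≤ |0| ^ θ)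
  have htθ : 0 < |t| ^ θ := by positivity
  have hquot (s : ℝ) (hs : s ≠ 0) (z : ℝ) :
      |iteratedDeriv k f (z + s) - iteratedDeriv k f z| / |s| ^ θ ≤ C := by
    rw [div_le_iff₀ (by positivity)]
    simpa using hC (z + s) z
  rw [← div_le_iff₀ htθ]
  refine (le_ciSup ⟨C, forall_mem_range.2 (hquot t ht)⟩ x).trans ?_
  exact le_ciSup (f := fun s : {s : ℝ // s ≠ 0} => ⨆ z : ℝ,
      |iteratedDeriv k f (z + s) - iteratedDeriv k f z| / |(s : ℝ)| ^ θ)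
    ⟨C, forall_mem_range.2 fun s => ciSup_le (hquot s s.2)⟩ ⟨t, ht⟩

end HolderNorm

section Smoothing

variable {k : ℕ} {θ : ℝ} {g : ℝ → ℝ}

lemma iteratedDeriv_succ_integral_bbmK_mul (hgC : ContDiff ℝ (k : ℕ∞) g)
    (hgB : ∀ j ≤ k, ∃ C, ∀ x, |iteratedDeriv j g x| ≤ C) :
    iteratedDeriv (k + 1) (fun x => ∫ y, bbmK y * g (x - y)) =
      fun x => (∫ y, bbmG₂ y * iteratedDeriv k g (x - y)) - iteratedDeriv k g x := by
  obtain ⟨C, hC⟩ := hgB k le_rfl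
  rw [iteratedDeriv_succ, iteratedDeriv_integral_mul_comp_sub integrable_bbmK hgC hgB k le_rfl]
  exact funext fun x =>
    (hasDerivAt_integral_bbmK_mul (hgC.continuous_iteratedDeriv k le_rfl) hC x).deriv

theorem contDiff_integral_bbmK_mul (hgC : ContDiff ℝ (k : ℕ∞) g)
    (hgB : ∀ j ≤ k, ∃ C, ∀ x, |iteratedDeriv j g x| ≤ C) :
    ContDiff ℝ ((k + 1 : ℕ) : ℕ∞) (fun x => ∫ y, bbmK y * g (x - y)) := by
  have hdiff (j : ℕ) (hj : j ≤ k) :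
      Differentiable ℝ (iteratedDeriv j fun x => ∫ y, bbmK y * g (x - y)) := by
    obtain ⟨C, hC⟩ := hgB j hj
    rw [iteratedDeriv_integral_mul_comp_sub integrable_bbmK hgC hgB j hj]
    exact fun x => (hasDerivAt_integral_bbmK_mul
      (hgC.continuous_iteratedDeriv j (by exact_mod_cast hj)) hC x).differentiableAt
  refine contDiff_iff_iteratedDeriv.2
    ⟨fun j hj => ?_, fun j hj => hdiff j (Nat.lt_succ_iff.1 (by exact_mod_cast hj))⟩
  rcases (show j ≤ k + 1 by exact_mod_cast hj).lt_or_eq with hj | rfl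
  · exact (hdiff j (by omega)).continuous
  · obtain ⟨C, hC⟩ := hgB k le_rfl
    have hgk := hgC.continuous_iteratedDeriv k le_rfl
    rw [iteratedDeriv_succ_integral_bbmK_mul hgC hgB]
    exact (continuous_iff_continuousAt.2 fun x =>
      (hasDerivAt_integral_bbmG₂_mul hgk hC x).continuousAt).sub hgk

lemma abs_iteratedDeriv_integral_bbmK_mul_le (hgC : ContDiff ℝ (k : ℕ∞) g)
    (hgB : ∀ j ≤ k, ∃ C, ∀ x, |iteratedDeriv j g x| ≤ C) {j : ℕ} (hj : j ≤ k) (x : ℝ) :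
    |iteratedDeriv j (fun x => ∫ y, bbmK y * g (x - y)) x| ≤ supNorm (iteratedDeriv j g) := by
  obtain ⟨C, hC⟩ := hgB j hj
  rw [iteratedDeriv_integral_mul_comp_sub integrable_bbmK hgC hgB j hj]
  exact (abs_integral_mul_comp_sub_le integrable_bbmK (le_supNorm hC) x).trans
    (mul_le_of_le_one_left (supNorm_nonneg _) integral_abs_bbmK_le_one)

lemma abs_iteratedDeriv_succ_integral_bbmK_mul_le (hgC : ContDiff ℝ (k : ℕ∞) g)
    (hgB : ∀ j ≤ k, ∃ C, ∀ x, |iteratedDeriv j g x| ≤ C) (x : ℝ) :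
    |iteratedDeriv (k + 1) (fun x => ∫ y, bbmK y * g (x - y)) x| ≤
      2 * supNorm (iteratedDeriv k g) := by
  obtain ⟨C, hC⟩ := hgB k le_rfl
  rw [iteratedDeriv_succ_integral_bbmK_mul hgC hgB]
  exact abs_integral_bbmG₂_mul_sub_le (le_supNorm hC) x

lemma abs_iteratedDeriv_succ_integral_bbmK_mul_add_sub_le (hg : MemHolderClass k θ g)
    (x t : ℝ) :
    |iteratedDeriv (k + 1) (fun x => ∫ y, bbmK y * g (x - y)) (x + t) -
      iteratedDeriv (k + 1) (fun x => ∫ y, bbmK y * g (x - y)) x| ≤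
      2 * holderSeminorm k θ g * |t| ^ θ := by
  obtain ⟨hgC, hgB, hgH⟩ := hg
  obtain ⟨C, hC⟩ := hgB k le_rfl
  rw [iteratedDeriv_succ_integral_bbmK_mul hgC hgB, mul_assoc]
  exact abs_integral_bbmG₂_mul_sub_add_sub_le (hgC.continuous_iteratedDeriv k le_rfl) hC
    (fun z => abs_iteratedDeriv_add_sub_le hgH z t) x

theorem memHolderClass_succ_integral_bbmK_mul (hg : MemHolderClass k θ g) :
    MemHolderClass (k + 1) θ (fun x => ∫ y, bbmK y * g (x - y)) := by
  refine ⟨contDiff_integral_bbmK_mul hg.1 hg.2.1, fun j hj => ?_, 2 * holderSeminorm k θ g,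
    fun x y => ?_⟩
  · rcases hj.lt_or_eq with hj | rfl
    · exact ⟨_, abs_iteratedDeriv_integral_bbmK_mul_le hg.1 hg.2.1 (Nat.lt_succ_iff.1 hj)⟩
    · exact ⟨_, abs_iteratedDeriv_succ_integral_bbmK_mul_le hg.1 hg.2.1⟩
  · simpa using abs_iteratedDeriv_succ_integral_bbmK_mul_add_sub_le hg y (x - y)

theorem holderNorm_integral_bbmK_mul_le (hg : MemHolderClass k θ g) :
    holderNorm (k + 1) θ (fun x => ∫ y, bbmK y * g (x - y)) ≤ 3 * holderNorm k θ g := by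
  have hlow : ∑ j ∈ Finset.range (k + 1),
      supNorm (iteratedDeriv j fun x => ∫ y, bbmK y * g (x - y)) ≤
        ∑ j ∈ Finset.range (k + 1), supNorm (iteratedDeriv j g) :=
    Finset.sum_le_sum fun j hj => supNorm_le (abs_iteratedDeriv_integral_bbmK_mul_le hg.1 hg.2.1
      (Nat.lt_succ_iff.1 (Finset.mem_range.1 hj)))
  have htop := supNorm_le (abs_iteratedDeriv_succ_integral_bbmK_mul_le hg.1 hg.2.1)
  have hsemi := holderSeminorm_le (by linarith [holderSeminorm_nonneg k θ g])
    (abs_iteratedDeriv_succ_integral_bbmK_mul_add_sub_le hg)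
  have hk : supNorm (iteratedDeriv k g) ≤ ∑ j ∈ Finset.range (k + 1), supNorm (iteratedDeriv j g) :=
    Finset.single_le_sum (f := fun j => supNorm (iteratedDeriv j g))
      (fun j _ => supNorm_nonneg _) (Finset.self_mem_range_succ k)
  rw [holderNorm, holderNorm, Finset.sum_range_succ]
  linarith [supNorm_nonneg (iteratedDeriv k g), holderSeminorm_nonneg k θ g]

end Smoothing

theorem holder_bbmK_convolution_smoothing_general (k : ℕ) (θ : ℝ) :
    ∃ c : ℝ, 0 < c ∧ ∀ g : ℝ → ℝ, MemHolderClass k θ g →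
      MemHolderClass (k + 1) θ (fun x => ∫ y : ℝ, bbmK y * g (x - y)) ∧
      (∀ x : ℝ, HasDerivAt (fun x => ∫ y : ℝ, bbmK y * g (x - y))
        ((∫ y : ℝ, bbmG₂ y * g (x - y)) - g x) x) ∧
      holderNorm (k + 1) θ (fun x => ∫ y : ℝ, bbmK y * g (x - y)) ≤
        c * holderNorm k θ g := by
  refine ⟨3, by norm_num, fun g hg => ⟨memHolderClass_succ_integral_bbmK_mul hg, fun x => ?_,
    holderNorm_integral_bbmK_mul_le hg⟩⟩
  obtain ⟨M, hM⟩ := hg.2.1 0 k.zero_le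
  exact hasDerivAt_integral_bbmK_mul hg.1.continuous (by simpa using hM) x

/-- Smoothing of `∂ₓ(1-∂ₓ²)^{-1} = K ∗ ·` in Hölder classes: there is `c = c(k,θ) > 0` such
that for every `g ∈ C^{k,θ}(ℝ)`, one has `K ∗ g ∈ C^{k+1,θ}(ℝ)`,
`(K ∗ g)′ = G₂ ∗ g - g` everywhere, and `‖K ∗ g‖_{C^{k+1,θ}} ≤ c ‖g‖_{C^{k,θ}}`. -/
theorem holder_bbmK_convolution_smoothing (k : ℕ) (θ : ℝ) (hθ0 : 0 ≤ θ) (hθ1 : θ ≤ 1) :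
    ∃ c : ℝ, 0 < c ∧ ∀ g : ℝ → ℝ, MemHolderClass k θ g →
      MemHolderClass (k + 1) θ (fun x => ∫ y : ℝ, bbmK y * g (x - y)) ∧
      (∀ x : ℝ, HasDerivAt (fun x => ∫ y : ℝ, bbmK y * g (x - y))
        ((∫ y : ℝ, bbmG₂ y * g (x - y)) - g x) x) ∧
      holderNorm (k + 1) θ (fun x => ∫ y : ℝ, bbmK y * g (x - y)) ≤
        c * holderNorm k θ g :=
  holder_bbmK_convolution_smoothing_general k θ
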